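/- arXiv:1805.12095 — 2 statements merged into one kernel-verified Lean document; each statement's English description precedes it below -/
import Mathlib

section
/- For integers d ≥ 1, the coefficient a(i; d, m) of x^m in γ^i(x) — where γ(x,t) = λ(x, t/(1-t)) and λ(x,t) = exp(Σ_{n≥1} ((-1)^{n-1}/n) n^d x tⁿ) formally in ℚ[x][[t]] — vanishes whenever m·d < i. -/
/-! The coefficient of `t^i` in `(t/(1-t))^n` is `C(i-1, n-1)`, so for `i ≥ 1` the coefficient of
`t^i` in `F_d` is `∑_k (-1)^k C(i-1, k) (k+1)^(d-1)`, an `(i-1)`-st finite difference of a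
polynomial of degree `d-1`; it vanishes once `i > d`. Thus `F_d` is a polynomial in `t` of degree
at most `d`, `F_d^m` has degree at most `m d`, and `a(i; d, m) = [t^i] F_d^m / m!`. -/

/-- Stirling numbers of the second kind. -/
def stirling2 : ℕ → ℕ → ℕ
  | 0, 0 => 1
  | 0, _ + 1 => 0
  | _ + 1, 0 => 0
  | n + 1, k + 1 => (k + 1) * stirling2 n (k + 1) + stirling2 n k

/-- The power series `t/(1-t) = t + t² + t³ + ⋯` over `ℚ`. -/
noncomputable def tOneSubT : PowerSeries ℚ := PowerSeries.mk fun n => if n = 0 then 0 else 1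

/-- `F_d(t) = ∑_{n ≥ 1} ((-1)^{n-1}/n) n^d (t/(1-t))^n`, so that
`γ(x,t) = λ(x, t/(1-t)) = exp(x · F_d(t))` for `ψ^n(x) = n^d x`. -/
noncomputable def Fser (d : ℕ) : PowerSeries ℚ :=
  PowerSeries.mk fun i => ∑ n ∈ Finset.range (i + 1),
    (if n = 0 then (0 : ℚ) else (-1) ^ (n - 1) / (n : ℚ) * (n : ℚ) ^ d) *
      PowerSeries.coeff i (tOneSubT ^ n)

/-- The coefficient of `t^i` in `exp(x · F_d(t)) ∈ ℚ[x][[t]]`, as a polynomial in `x`. -/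
noncomputable def gammaPoly (d i : ℕ) : Polynomial ℚ :=
  ∑ m ∈ Finset.range (i + 1),
    Polynomial.C ((Nat.factorial m : ℚ)⁻¹ * PowerSeries.coeff i (Fser d ^ m)) *
      Polynomial.X ^ m

/-- The universal coefficient `a(i; d, m)` of `x^m` in `γ^i(x)`. -/
noncomputable def acoef (i d m : ℕ) : ℚ := (gammaPoly d i).coeff m

open Finset PowerSeries

theorem alternating_sum_choose_mul_add_pow_eq_zero {R : Type*} [CommRing R] {e N : ℕ}
    (h : e < N) (a : R) :
    ∑ k ∈ range (N + 1), (-1 : R) ^ k * N.choose k * (a + k) ^ e = 0 := by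
  have hΔ := congr_fun (fwdDiff_iter_pow_eq_zero_of_lt (R := R) h) a
  rw [fwdDiff_iter_eq_sum_shift] at hΔ
  have hsign : ∀ k ∈ range (N + 1), (-1 : R) ^ k = (-1) ^ N * (-1) ^ (N - k) := fun k hk => by
    obtain ⟨j, rfl⟩ := Nat.exists_eq_add_of_le (mem_range_succ_iff.mp hk)
    rw [Nat.add_sub_cancel_left, pow_add, mul_assoc, ← mul_pow]
    simp
  calc _ = (-1 : R) ^ N *
        ∑ k ∈ range (N + 1), ((-1 : ℤ) ^ (N - k) * N.choose k) • (a + k • 1) ^ e := by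
        rw [mul_sum]
        refine sum_congr rfl fun k hk => ?_
        simp [hsign k hk, zsmul_eq_mul, mul_assoc]
    _ = 0 := by simpa using hΔ

theorem PowerSeries.coeff_pow_eq_zero_of_coeff_eq_zero {R : Type*} [CommSemiring R]
    {f : R⟦X⟧} {d : ℕ} (hf : ∀ n, d < n → coeff n f = 0) (m : ℕ) {n : ℕ}
    (hn : m * d < n) :
    coeff n (f ^ m) = 0 := by
  have hpoly : f = (trunc (d + 1) f : R⟦X⟧) := by
    ext k
    rw [Polynomial.coeff_coe, coeff_trunc]
    split_ifs with hk
    · rfl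
    · exact hf k (by omega)
  have hdeg : (trunc (d + 1) f).natDegree ≤ d := Nat.lt_succ_iff.mp (natDegree_trunc_lt f d)
  rw [hpoly, ← Polynomial.coe_pow, Polynomial.coeff_coe]
  exact Polynomial.coeff_eq_zero_of_natDegree_lt
    ((Polynomial.natDegree_pow_le_of_le m hdeg).trans_lt hn)

theorem tOneSubT_pow (n : ℕ) : tOneSubT ^ n = X ^ n * (invOneSubPow ℚ n).val := by
  have htOneSubT : tOneSubT = X * (invOneSubPow ℚ 1).val := by
    rw [invOneSubPow_val_eq_mk_sub_one_add_choose_of_pos ℚ 1 one_pos]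
    ext (_ | i)
    · simp [tOneSubT]
    · simp [tOneSubT, coeff_succ_X_mul]
  rw [htOneSubT, mul_pow, ← Units.val_pow_eq_pow_val, invOneSubPow_eq_inv_one_sub_pow,
    invOneSubPow_eq_inv_one_sub_pow, ← pow_mul, one_mul]

theorem coeff_tOneSubT_pow {n i : ℕ} (hn : 1 ≤ n) :
    coeff i (tOneSubT ^ n) = if n ≤ i then ((i - 1).choose (n - 1) : ℚ) else 0 := by
  rw [tOneSubT_pow, coeff_X_pow_mul', invOneSubPow_val_eq_mk_sub_one_add_choose_of_pos ℚ n hn]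
  split_ifs
  · rw [coeff_mk]
    congr 2
    omega
  · rfl

theorem coeff_succ_Fser_succ (N e : ℕ) :
    coeff (N + 1) (Fser (e + 1)) =
      ∑ k ∈ range (N + 1), (-1 : ℚ) ^ k * N.choose k * (1 + k) ^ e := by
  rw [Fser, coeff_mk, sum_range_succ', if_pos rfl, zero_mul, add_zero]
  refine sum_congr rfl fun k hk => ?_
  rw [coeff_tOneSubT_pow (by omega), if_neg k.succ_ne_zero,
    if_pos (by simpa using mem_range.mp hk)]
  field_simp
  push_cast
  ring

theorem coeff_Fser_eq_zero_of_lt {d i : ℕ} (hd : 1 ≤ d) (hi : d < i) :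
    coeff i (Fser d) = 0 := by
  obtain ⟨N, rfl⟩ : ∃ N, i = N + 1 := ⟨i - 1, by omega⟩
  obtain ⟨e, rfl⟩ := Nat.exists_eq_add_of_le' hd
  rw [coeff_succ_Fser_succ]
  exact alternating_sum_choose_mul_add_pow_eq_zero (by omega) 1

theorem acoef_eq (i d m : ℕ) :
    acoef i d m = if m ≤ i then (m.factorial : ℚ)⁻¹ * coeff i (Fser d ^ m) else 0 := by
  simp only [acoef, gammaPoly, Polynomial.finsetSum_coeff, Polynomial.coeff_C_mul_X_pow,
    sum_ite_eq, mem_range, Nat.lt_succ_iff]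

/-- For `d ≥ 1`, the coefficient `a(i; d, m)` of `x^m t^i` in
`exp(x · ∑_{n≥1} ((-1)^{n-1}/n) n^d (t/(1-t))^n)` vanishes whenever `m·d < i`. -/
theorem stmt_10 (d i m : ℕ) (hd : 1 ≤ d) (h : m * d < i) : acoef i d m = 0 := by
  have hFser : ∀ n, d < n → coeff n (Fser d) = 0 := fun _ => coeff_Fser_eq_zero_of_lt hd
  simp [acoef_eq, coeff_pow_eq_zero_of_coeff_eq_zero hFser m h]
end

section
/- In ℚ[x][[t]], the coefficient of t^i in exp(x · Σ_{n≥1} ((-1)^{n-1}/n) n^d (t/(1-t))^n) has linear term (in x) equal to (-1)^{i-1}(i-1)! S(d,i) x, where S(d,i) is the Stirling number of the second kind. -/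
open Finset PowerSeries

theorem stirling2_eq_stirlingSecond : stirling2 = Nat.stirlingSecond := by
  funext n k
  induction n generalizing k with
  | zero => cases k <;> rfl
  | succ n ih => cases k <;> simp [stirling2, Nat.stirlingSecond_succ_succ, ih]

theorem Nat.factorial_mul_stirlingSecond_eq_sum {R : Type*} [CommRing R] (n k : ℕ) :
    (k.factorial * n.stirlingSecond k : R) =
      ∑ j ∈ range (k + 1), (-1) ^ (k + j) * k.choose j * (j : R) ^ n := by
  induction n generalizing k with
  | zero =>
    have h : ∑ j ∈ range (k + 1), (-1 : R) ^ j * k.choose j = if k = 0 then 1 else 0 := by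
      exact_mod_cast congrArg (Int.cast : ℤ → R) (Int.alternating_sum_range_choose (n := k))
    simp_rw [pow_zero, mul_one, pow_add, mul_assoc, ← mul_sum, h]
    cases k <;> simp
  | succ n ih =>
    cases k with
    | zero => simp
    | succ k =>
      -- `j * C(k+1, j) = (k+1) * (C(k+1, j) - C(k, j))` splits off the extra factor `j`
      have hterm : ∀ j ∈ range (k + 2),
          (-1 : R) ^ (k + 1 + j) * (k + 1).choose j * (j : R) ^ (n + 1) =
            (k + 1) * ((-1) ^ (k + 1 + j) * (k + 1).choose j * (j : R) ^ n) +
              (k + 1) * ((-1) ^ (k + j) * k.choose j * (j : R) ^ n) := by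
        intro j hj
        have hc := congrArg (Nat.cast : ℕ → R) (Nat.choose_mul_succ_eq k j)
        push_cast [Nat.cast_sub (mem_range_succ_iff.mp hj)] at hc
        linear_combination -(-1 : R) ^ (k + j) * (j : R) ^ n * hc
      rw [sum_congr rfl hterm, sum_add_distrib, ← mul_sum, ← mul_sum,
        sum_range_succ (fun j => (-1 : R) ^ (k + j) * k.choose j * (j : R) ^ n) (k + 1),
        Nat.choose_succ_self, ← ih, ← ih, Nat.stirlingSecond_succ_succ, Nat.factorial_succ]
      push_cast
      ring

theorem tOneSubT_eq_X_mul_mk_one : tOneSubT = X * PowerSeries.mk 1 := by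
  ext n
  cases n <;> simp [tOneSubT, coeff_succ_X_mul]

theorem coeff_succ_tOneSubT_pow_succ (j m : ℕ) :
    coeff (j + 1) (tOneSubT ^ (m + 1)) = j.choose m := by
  rw [tOneSubT_eq_X_mul_mk_one, mul_pow, mk_one_pow_eq_mk_choose_add, coeff_X_pow_mul']
  split_ifs with h
  · rw [coeff_mk, Nat.add_sub_add_right, Nat.add_sub_cancel' (by omega)]
  · rw [Nat.choose_eq_zero_of_lt (by omega), Nat.cast_zero]

theorem coeff_succ_Fser (d j : ℕ) :
    coeff (j + 1) (Fser d) =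
      ∑ m ∈ range (j + 1), (-1) ^ m / (m + 1 : ℚ) * (m + 1 : ℚ) ^ d * j.choose m := by
  rw [Fser, coeff_mk, sum_range_succ']
  simp [coeff_succ_tOneSubT_pow_succ]

theorem succ_mul_coeff_succ_Fser {d : ℕ} (hd : d ≠ 0) (j : ℕ) :
    (j + 1 : ℚ) * coeff (j + 1) (Fser d) =
      (-1) ^ j * ∑ n ∈ range (j + 2), (-1) ^ (j + 1 + n) * (j + 1).choose n * (n : ℚ) ^ d := by
  rw [coeff_succ_Fser, mul_sum, mul_sum, sum_range_succ' _ (j + 1)]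
  simp only [Nat.cast_zero, zero_pow hd, mul_zero, add_zero]
  refine sum_congr rfl fun m _ => ?_
  have hc := congrArg (Nat.cast : ℕ → ℚ) (Nat.add_one_mul_choose_eq j m)
  push_cast at hc ⊢
  have hs : (-1 : ℚ) ^ j * (-1) ^ j = 1 := by rw [← pow_add, Even.neg_one_pow ⟨j, rfl⟩]
  field_simp
  linear_combination (-1 : ℚ) ^ m * hc - (-1 : ℚ) ^ m * (j + 1).choose (m + 1) * (m + 1) * hs

theorem acoef_eq_coeff_Fser_pow {i m : ℕ} (hm : m ≤ i) (d : ℕ) :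
    acoef i d m = (m.factorial : ℚ)⁻¹ * coeff i (Fser d ^ m) := by
  rw [acoef, gammaPoly, Polynomial.finsetSum_coeff, sum_eq_single m]
  · rw [Polynomial.coeff_C_mul_X_pow, if_pos rfl]
  · intro b _ hb
    rw [Polynomial.coeff_C_mul_X_pow, if_neg hb.symm]
  · intro h
    exact absurd (mem_range_succ_iff.mpr hm) h

/-- The linear term (in `x`) of the `t^i`-coefficient of
`exp(x · ∑_{n≥1} ((-1)^{n-1}/n) n^d (t/(1-t))^n)` equals
`(-1)^{i-1} (i-1)! S(d,i) · x`, where `S(d,i)` is the Stirling number of the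
second kind. -/
theorem stmt_11 (d i : ℕ) (hd : 1 ≤ d) (hi : 1 ≤ i) :
    acoef i d 1 =
      (-1 : ℚ) ^ (i - 1) * (Nat.factorial (i - 1) : ℚ) * (stirling2 d i : ℚ) := by
  obtain ⟨j, rfl⟩ := Nat.exists_eq_add_of_le' hi
  have hlinear : acoef (j + 1) d 1 = coeff (j + 1) (Fser d) := by
    simp [acoef_eq_coeff_Fser_pow (Nat.le_add_left 1 j)]
  rw [Nat.add_sub_cancel, hlinear, ← mul_right_inj' (Nat.cast_add_one_ne_zero j),
    succ_mul_coeff_succ_Fser (by omega), ← Nat.factorial_mul_stirlingSecond_eq_sum,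
    stirling2_eq_stirlingSecond, Nat.factorial_succ]
  push_cast
  ring
end
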